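/- arXiv:2603.02478 — 2 statements merged into one kernel-verified Lean document; each statement's English description precedes it below -/
import Mathlib

section
/- Let b₁, b₂ ∈ ℝ³ be unit vectors and a₁, a₂ ∈ ℝ³ unit vectors, with b₁ × b₂ ≠ 0. Suppose there exist δ, β > 0 such that for all t, U_i(t) := (1/δ)∫ₜ^{t+δ} R(s)a_i (R(s)a_i)ᵀ ds ⪰ β I₃ for i = 1, 2 (strong persistent excitation). Then there exists μ > 0 such that for all t, the Gramian W(t) = -b₁^× U₁(t) b₁^× - b₂^× U₂(t) b₂^× ⪰ μ I₃. -/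
open Matrix
open scoped Matrix

attribute [local instance] Matrix.normedAddCommGroup Matrix.normedSpace

/-- The skew-symmetric cross-product matrix. -/
noncomputable def skew (b : Fin 3 → ℝ) : Matrix (Fin 3) (Fin 3) ℝ :=
  !![0, -b 2, b 1; b 2, 0, -b 0; -b 1, b 0, 0]

lemma skew_conjTranspose (b : Fin 3 → ℝ) : (skew b)ᴴ = -skew b := by
  ext i j; fin_cases i <;> fin_cases j <;> simp [skew]

lemma skew_transpose (b : Fin 3 → ℝ) : (skew b)ᵀ = -skew b := by
  have := skew_conjTranspose b; simpa using this

lemma skew_mulVec (b v : Fin 3 → ℝ) : skew b *ᵥ v = b ⨯₃ v := by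
  ext i; fin_cases i <;>
    simp [skew, Matrix.mulVec, dotProduct, Fin.sum_univ_three, cross_apply] <;> ring

lemma quadform_skew (U : Matrix (Fin 3) (Fin 3) ℝ) (b v : Fin 3 → ℝ) :
    v ⬝ᵥ ((-(skew b * U * skew b)) *ᵥ v)
      = (skew b *ᵥ v) ⬝ᵥ (U *ᵥ (skew b *ᵥ v)) := by
  rw [Matrix.neg_mulVec, dotProduct_neg, ← Matrix.mulVec_mulVec, ← Matrix.mulVec_mulVec,
    Matrix.dotProduct_mulVec v (skew b), ← Matrix.mulVec_transpose, skew_transpose,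
    Matrix.neg_mulVec, neg_dotProduct, neg_neg]

lemma cs_dot (u v : Fin 3 → ℝ) : (u ⬝ᵥ v)^2 ≤ (u ⬝ᵥ u) * (v ⬝ᵥ v) := by
  simp only [dotProduct, Fin.sum_univ_three]
  nlinarith [sq_nonneg (u 0 * v 1 - u 1 * v 0), sq_nonneg (u 0 * v 2 - u 2 * v 0),
    sq_nonneg (u 1 * v 2 - u 2 * v 1)]

lemma scalar_step (x y c n s : ℝ) (hn : 0 ≤ n) (hs : s = x^2 + y^2)
    (h : s^2 ≤ (s + 2*x*y*c) * n) : 2 * s ≤ (3 + c^2) * n := by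
  rcases le_or_gt s 0 with h0 | h0
  · nlinarith
  · have habs : 2*x*y*c ≤ |c| * s := by
      rcases abs_cases c with ⟨hc1, _⟩ | ⟨hc1, _⟩ <;> nlinarith [sq_nonneg (x - y), sq_nonneg (x + y)]
    have h1 : s ≤ (1 + |c|) * n := by
      have : s * s ≤ (1 + |c|) * s * n := by nlinarith
      nlinarith
    nlinarith [sq_nonneg (|c| - 1), sq_abs c, abs_nonneg c]

lemma key_cross_lower (b₁ b₂ v : Fin 3 → ℝ) (hb₁ : b₁ ⬝ᵥ b₁ = 1) (hb₂ : b₂ ⬝ᵥ b₂ = 1) :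
    ((1 - (b₁ ⬝ᵥ b₂)^2)/2) * (v ⬝ᵥ v) ≤
      (b₁ ⨯₃ v) ⬝ᵥ (b₁ ⨯₃ v) + (b₂ ⨯₃ v) ⬝ᵥ (b₂ ⨯₃ v) := by
  set x := b₁ ⬝ᵥ v with hx
  set y := b₂ ⬝ᵥ v with hy
  set c := b₁ ⬝ᵥ b₂ with hc
  have hn : (0:ℝ) ≤ v ⬝ᵥ v :=
    Finset.sum_nonneg fun i _ => mul_self_nonneg _
  have l1 : (b₁ ⨯₃ v) ⬝ᵥ (b₁ ⨯₃ v) = v ⬝ᵥ v - x^2 := by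
    rw [cross_dot_cross, hb₁]; ring_nf; rw [dotProduct_comm v b₁]; ring
  have l2 : (b₂ ⨯₃ v) ⬝ᵥ (b₂ ⨯₃ v) = v ⬝ᵥ v - y^2 := by
    rw [cross_dot_cross, hb₂]; ring_nf; rw [dotProduct_comm v b₂]; ring
  have hcs := cs_dot (x • b₁ + y • b₂) v
  have hu : (x • b₁ + y • b₂) ⬝ᵥ v = x^2 + y^2 := by
    simp [add_dotProduct, smul_dotProduct, ← hx, ← hy]; ring
  have huu : (x • b₁ + y • b₂) ⬝ᵥ (x • b₁ + y • b₂) = x^2 + y^2 + 2*x*y*c := by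
    simp [add_dotProduct, smul_dotProduct, dotProduct_add,
      dotProduct_smul, hb₁, hb₂, ← hc, dotProduct_comm b₂ b₁]
    ring
  rw [hu, huu] at hcs
  have := scalar_step x y c (v ⬝ᵥ v) (x^2+y^2) hn rfl (by nlinarith)
  nlinarith

/-- under strong persistent excitation of `Ra₁` and `Ra₂` and
non-collinearity of `b₁, b₂`, the two-scalar Gramian
`W(t) = -b₁^× U₁(t) b₁^× - b₂^× U₂(t) b₂^×` is uniformly positive definite:
`W(t) ⪰ μ I₃` for some `μ > 0` and all `t`. -/
theorem two_scalar_gramian_uniform_posdef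
    (a₁ a₂ b₁ b₂ : Fin 3 → ℝ) (R : ℝ → Matrix (Fin 3) (Fin 3) ℝ)
    (ha₁ : a₁ ⬝ᵥ a₁ = 1) (ha₂ : a₂ ⬝ᵥ a₂ = 1)
    (hb₁ : b₁ ⬝ᵥ b₁ = 1) (hb₂ : b₂ ⬝ᵥ b₂ = 1)
    (hbb : b₁ ⨯₃ b₂ ≠ 0)
    (hSO : ∀ s, (R s)ᵀ * R s = 1 ∧ (R s).det = 1)
    (hcont : Continuous R)
    (δ β : ℝ) (hδ : 0 < δ) (hβ : 0 < β)
    (hPE₁ : ∀ t : ℝ, (((1 / δ) • ∫ s in t..(t + δ),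
        vecMulVec (R s *ᵥ a₁) (R s *ᵥ a₁)) - β • (1 : Matrix (Fin 3) (Fin 3) ℝ)).PosSemidef)
    (hPE₂ : ∀ t : ℝ, (((1 / δ) • ∫ s in t..(t + δ),
        vecMulVec (R s *ᵥ a₂) (R s *ᵥ a₂)) - β • (1 : Matrix (Fin 3) (Fin 3) ℝ)).PosSemidef) :
    ∃ μ > (0 : ℝ), ∀ t : ℝ,
      ((-(skew b₁ * ((1 / δ) • ∫ s in t..(t + δ),
            vecMulVec (R s *ᵥ a₁) (R s *ᵥ a₁)) * skew b₁)
        - skew b₂ * ((1 / δ) • ∫ s in t..(t + δ),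
            vecMulVec (R s *ᵥ a₂) (R s *ᵥ a₂)) * skew b₂)
        - μ • (1 : Matrix (Fin 3) (Fin 3) ℝ)).PosSemidef := by
  set c := b₁ ⬝ᵥ b₂ with hc
  have hc2 : c^2 < 1 := by
    have hpos : 0 < (b₁ ⨯₃ b₂) ⬝ᵥ (b₁ ⨯₃ b₂) := by
      rcases (Finset.sum_nonneg fun i _ =>
        mul_self_nonneg ((b₁ ⨯₃ b₂) i) : (0:ℝ) ≤ (b₁ ⨯₃ b₂) ⬝ᵥ (b₁ ⨯₃ b₂)).lt_or_eq with h | h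
      · exact h
      · exact absurd (dotProduct_self_eq_zero.mp h.symm) hbb
    have : (b₁ ⨯₃ b₂) ⬝ᵥ (b₁ ⨯₃ b₂) = 1 - c^2 := by
      rw [cross_dot_cross, hb₁, hb₂, dotProduct_comm b₂ b₁, ← hc]; ring
    linarith [this ▸ hpos]
  refine ⟨β * ((1 - c^2)/2), by nlinarith, fun t => ?_⟩
  set U₁ := ((1 / δ) • ∫ s in t..(t + δ),
      vecMulVec (R s *ᵥ a₁) (R s *ᵥ a₁) : Matrix (Fin 3) (Fin 3) ℝ) with hU₁def
  set U₂ := ((1 / δ) • ∫ s in t..(t + δ),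
      vecMulVec (R s *ᵥ a₂) (R s *ᵥ a₂) : Matrix (Fin 3) (Fin 3) ℝ) with hU₂def
  have hbeta1 : (β • (1 : Matrix (Fin 3) (Fin 3) ℝ)).IsHermitian := by
    simp [Matrix.IsHermitian]
  have hU₁h : U₁.IsHermitian := by
    have h := ((hPE₁ t).1).add hbeta1
    rwa [sub_add_cancel] at h
  have hU₂h : U₂.IsHermitian := by
    have h := ((hPE₂ t).1).add hbeta1
    rwa [sub_add_cancel] at h
  refine PosSemidef.of_dotProduct_mulVec_nonneg ?_ ?_
  · show _ = _
    simp only [Matrix.conjTranspose_sub, Matrix.conjTranspose_neg, Matrix.conjTranspose_mul,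
      Matrix.conjTranspose_smul, Matrix.conjTranspose_one, skew_conjTranspose,
      hU₁h.eq, hU₂h.eq, Matrix.neg_mul, Matrix.mul_neg, neg_neg, star_trivial]
    rw [Matrix.mul_assoc, Matrix.mul_assoc]
  · intro x
    have hstar : star x = x := by
      funext i; simp
    rw [hstar, Matrix.sub_mulVec, Matrix.sub_mulVec, dotProduct_sub,
      dotProduct_sub, quadform_skew]
    have hq2 : x ⬝ᵥ ((skew b₂ * U₂ * skew b₂) *ᵥ x)
        = -((skew b₂ *ᵥ x) ⬝ᵥ (U₂ *ᵥ (skew b₂ *ᵥ x))) := by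
      have := quadform_skew U₂ b₂ x
      rw [Matrix.neg_mulVec, dotProduct_neg] at this
      linarith
    rw [hq2]
    have hsm : x ⬝ᵥ (((β * ((1 - c^2)/2)) • (1 : Matrix (Fin 3) (Fin 3) ℝ)) *ᵥ x)
        = (β * ((1 - c^2)/2)) * (x ⬝ᵥ x) := by
      rw [Matrix.smul_mulVec, Matrix.one_mulVec, dotProduct_smul, smul_eq_mul]
    rw [hsm]
    set w₁ := skew b₁ *ᵥ x with hw₁
    set w₂ := skew b₂ *ᵥ x with hw₂
    have hp₁ := (hPE₁ t).dotProduct_mulVec_nonneg w₁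
    have hp₂ := (hPE₂ t).dotProduct_mulVec_nonneg w₂
    have hstar₁ : star w₁ = w₁ := by funext i; simp
    have hstar₂ : star w₂ = w₂ := by funext i; simp
    have hb1 : ∀ w : Fin 3 → ℝ, w ⬝ᵥ ((β • (1 : Matrix (Fin 3) (Fin 3) ℝ)) *ᵥ w)
        = β * (w ⬝ᵥ w) := fun w => by
      rw [Matrix.smul_mulVec, Matrix.one_mulVec, dotProduct_smul, smul_eq_mul]
    rw [hstar₁, Matrix.sub_mulVec, dotProduct_sub, hb1, sub_nonneg, ← hU₁def] at hp₁
    rw [hstar₂, Matrix.sub_mulVec, dotProduct_sub, hb1, sub_nonneg, ← hU₂def] at hp₂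
    have hkey := key_cross_lower b₁ b₂ x hb₁ hb₂
    rw [← skew_mulVec, ← skew_mulVec, ← hw₁, ← hw₂, ← hc] at hkey
    have hww₁ : (0:ℝ) ≤ w₁ ⬝ᵥ w₁ := Finset.sum_nonneg fun i _ => mul_self_nonneg _
    have hww₂ : (0:ℝ) ≤ w₂ ⬝ᵥ w₂ := Finset.sum_nonneg fun i _ => mul_self_nonneg _
    nlinarith [mul_le_mul_of_nonneg_left hkey (le_of_lt hβ)]
end

section
/- Suppose P : [0, ∞) → ℝ^{n×n} solves the continuous Riccati equation Ṗ = AP + PAᵀ - PCᵀQCP + V on an interval [0, T), with P(0) symmetric positive definite and A, C continuous and Q(t), V(t) continuous symmetric positive definite. Then P(t) remains symmetric positive definite for all t ∈ [0, T). -/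
/-!
`D = P - Pᵀ` solves the linear equation `Ḋ = M D + D Mᵀ` with `M = A - P Cᵀ Q C`, so Grönwall's
inequality and `D 0 = 0` force `D ≡ 0`. For positive definiteness, let `ts` be the first time at
which `P` leaves the open cone of positive definite matrices. Then `P ts` is positive semidefinite
and has a unit vector `x` in its kernel, so `xᵀ P ts x = 0` while `d/dt (xᵀ P x) = xᵀ V x > 0`
at `ts`: hence `xᵀ P x < 0` just before `ts`, a contradiction.
-/

open Matrix Set Filter Metric Topology
open scoped Matrix

attribute [local instance] Matrix.normedAddCommGroup Matrix.normedSpace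

section Analysis

variable {ι κ : Type*} [Fintype ι] [Fintype κ]

theorem Matrix.norm_mul_le_card_mul {ν α : Type*} [Fintype ν] [NormedRing α]
    (M : Matrix ι κ α) (N : Matrix κ ν α) :
    ‖M * N‖ ≤ Fintype.card κ * ‖M‖ * ‖N‖ := by
  rw [Matrix.norm_le_iff (by positivity)]
  intro i j
  calc ‖(M * N) i j‖ ≤ ∑ k, ‖M i k‖ * ‖N k j‖ :=
        (norm_sum_le _ _).trans (Finset.sum_le_sum fun k _ => norm_mul_le _ _)
    _ ≤ ∑ _k : κ, ‖M‖ * ‖N‖ := Finset.sum_le_sum fun k _ =>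
        mul_le_mul (norm_entry_le_entrywise_sup_norm M) (norm_entry_le_entrywise_sup_norm N)
          (norm_nonneg _) (norm_nonneg _)
    _ = Fintype.card κ * ‖M‖ * ‖N‖ := by simp [mul_assoc]

theorem HasDerivAt.matrix_transpose {P : ℝ → Matrix ι κ ℝ} {P' : Matrix ι κ ℝ} {t : ℝ}
    (h : HasDerivAt P P' t) : HasDerivAt (fun s => (P s)ᵀ) P'ᵀ t :=
  (transposeLinearEquiv ι κ ℝ ℝ).toLinearMap.toContinuousLinearMap.hasFDerivAt.comp_hasDerivAt t h

theorem HasDerivAt.dotProduct_mulVec {P : ℝ → Matrix ι κ ℝ} {P' : Matrix ι κ ℝ} {t : ℝ}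
    (h : HasDerivAt P P' t) (x : ι → ℝ) (y : κ → ℝ) :
    HasDerivAt (fun s => x ⬝ᵥ P s *ᵥ y) (x ⬝ᵥ P' *ᵥ y) t :=
  let L : Matrix ι κ ℝ →ₗ[ℝ] ℝ :=
    { toFun := fun M => x ⬝ᵥ M *ᵥ y
      map_add' := fun M N => by simp [add_mulVec]
      map_smul' := fun c M => by simp [smul_mulVec] }
  L.toContinuousLinearMap.hasFDerivAt.comp_hasDerivAt t h

theorem HasDerivAt.eventually_nhdsLT_neg {g : ℝ → ℝ} {g' t : ℝ} (hg : HasDerivAt g g' t)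
    (hg' : 0 < g') (ht : g t = 0) : ∀ᶠ s in 𝓝[<] t, g s < 0 := by
  filter_upwards [((hasDerivAt_iff_tendsto_slope.1 hg).mono_left (nhdsLT_le_nhdsNE t)).eventually
    (eventually_gt_nhds hg'), self_mem_nhdsWithin] with s hslope hlt
  exact neg_of_slope_pos hlt hslope ht

theorem Matrix.isClosed_setOf_posSemidef : IsClosed {M : Matrix ι ι ℝ | M.PosSemidef} := by
  have : {M : Matrix ι ι ℝ | M.PosSemidef} =
      {M | Mᴴ = M} ∩ ⋂ x : ι → ℝ, {M | 0 ≤ x ⬝ᵥ M *ᵥ x} := by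
    ext M
    simp [posSemidef_iff_dotProduct_mulVec, IsHermitian]
  rw [this]
  exact (isClosed_eq (by fun_prop) continuous_id).inter
    (isClosed_iInter fun x => isClosed_le continuous_const (by fun_prop))

theorem Matrix.isClosed_setOf_exists_dotProduct_mulVec_nonpos :
    IsClosed {M : Matrix ι ι ℝ | ∃ x ∈ sphere (0 : ι → ℝ) 1, x ⬝ᵥ M *ᵥ x ≤ 0} := by
  have : {M : Matrix ι ι ℝ | ∃ x ∈ sphere (0 : ι → ℝ) 1, x ⬝ᵥ M *ᵥ x ≤ 0} =
      Prod.fst '' {p : Matrix ι ι ℝ × sphere (0 : ι → ℝ) 1 | (p.2 : ι → ℝ) ⬝ᵥ p.1 *ᵥ p.2 ≤ 0} := by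
    ext M
    simp
  rw [this]
  exact isClosedMap_fst_of_compactSpace _ (isClosed_le (by fun_prop) continuous_const)

theorem Matrix.IsHermitian.posDef_iff_forall_mem_sphere {M : Matrix ι ι ℝ} (hM : M.IsHermitian) :
    M.PosDef ↔ ∀ x ∈ sphere (0 : ι → ℝ) 1, 0 < x ⬝ᵥ M *ᵥ x := by
  refine ⟨fun h x hx => ?_, fun h => .of_dotProduct_mulVec_pos hM fun x hx => ?_⟩
  · simpa using h.dotProduct_mulVec_pos (ne_zero_of_mem_unit_sphere ⟨x, hx⟩)
  · have := h (‖x‖⁻¹ • x) (mem_sphere_zero_iff_norm.2 (norm_smul_inv_norm hx))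
    simp only [mulVec_smul, dotProduct_smul, smul_dotProduct, smul_eq_mul] at this
    simpa using pos_of_mul_pos_right (pos_of_mul_pos_right this (by positivity)) (by positivity)

theorem Matrix.eq_zero_of_hasDerivWithinAt_mul_add_mul {M N D : ℝ → Matrix ι ι ℝ} {a b : ℝ}
    (hM : ContinuousOn M (Icc a b)) (hN : ContinuousOn N (Icc a b))
    (hD : ContinuousOn D (Icc a b))
    (hD' : ∀ t ∈ Ico a b, HasDerivWithinAt D (M t * D t + D t * N t) (Ici t) t)
    (ha : D a = 0) : ∀ t ∈ Icc a b, D t = 0 := by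
  obtain ⟨KM, hKM⟩ := isCompact_Icc.exists_bound_of_continuousOn hM
  obtain ⟨KN, hKN⟩ := isCompact_Icc.exists_bound_of_continuousOn hN
  refine eq_zero_of_abs_deriv_le_mul_abs_self_of_eq_zero_right (K := Fintype.card ι * (KM + KN))
    hD hD' ha fun t ht => ?_
  have ht' := Ico_subset_Icc_self ht
  calc ‖M t * D t + D t * N t‖
      ≤ Fintype.card ι * ‖M t‖ * ‖D t‖ + Fintype.card ι * ‖D t‖ * ‖N t‖ :=
        (norm_add_le _ _).trans (add_le_add (norm_mul_le_card_mul _ _) (norm_mul_le_card_mul _ _))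
    _ ≤ Fintype.card ι * KM * ‖D t‖ + Fintype.card ι * ‖D t‖ * KN := by
        gcongr
        exacts [hKM t ht', hKN t ht']
    _ = Fintype.card ι * (KM + KN) * ‖D t‖ := by ring

theorem Matrix.posDef_of_hasDerivAt_of_mulVec_eq_zero {P P' : ℝ → Matrix ι ι ℝ} {a b : ℝ}
    (hP : ∀ t ∈ Ico a b, HasDerivAt P (P' t) t) (hherm : ∀ t ∈ Ico a b, (P t).IsHermitian)
    (ha : (P a).PosDef) (hP' : ∀ t ∈ Ico a b, ∀ x ≠ 0, P t *ᵥ x = 0 → 0 < x ⬝ᵥ P' t *ᵥ x) :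
    ∀ t ∈ Ico a b, (P t).PosDef := by
  by_contra! ⟨t₀, ht₀, hnot⟩
  set S := {M : Matrix ι ι ℝ | ∃ x ∈ sphere (0 : ι → ℝ) 1, x ⬝ᵥ M *ᵥ x ≤ 0}
  have hS : ∀ t ∈ Icc a t₀, P t ∉ S ↔ (P t).PosDef := fun t ht => by
    simp [S, (hherm t ⟨ht.1, ht.2.trans_lt ht₀.2⟩).posDef_iff_forall_mem_sphere]
  set F := Icc a t₀ ∩ P ⁻¹' S
  have hF : IsClosed F := ContinuousOn.preimage_isClosed_of_isClosed
    (fun t ht => (hP t ⟨ht.1, ht.2.trans_lt ht₀.2⟩).continuousAt.continuousWithinAt)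
    isClosed_Icc isClosed_setOf_exists_dotProduct_mulVec_nonpos
  have hFa : a ∈ lowerBounds F := fun _ ht => ht.1.1
  have hts : sInf F ∈ F :=
    hF.csInf_mem ⟨t₀, ⟨ht₀.1, le_rfl⟩, (hS t₀ ⟨ht₀.1, le_rfl⟩).not_right.2 hnot⟩ ⟨a, hFa⟩
  set ts := sInf F
  have htsT : ts ∈ Ico a b := ⟨hts.1.1, hts.1.2.trans_lt ht₀.2⟩
  have hbefore : ∀ s ∈ Ico a ts, (P s).PosDef := fun s hs =>
    (hS s ⟨hs.1, hs.2.le.trans hts.1.2⟩).1 fun hsS =>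
      (csInf_le ⟨a, hFa⟩ ⟨⟨hs.1, hs.2.le.trans hts.1.2⟩, hsS⟩).not_gt hs.2
  have hats : a < ts := hts.1.1.lt_of_ne fun h => (hS a ⟨le_rfl, ht₀.1⟩).2 ha (h ▸ hts.2)
  have hpsd : (P ts).PosSemidef := isClosed_setOf_posSemidef.mem_of_tendsto
    ((hP ts htsT).continuousAt.tendsto.mono_left nhdsWithin_le_nhds)
    (eventually_of_mem (Ioo_mem_nhdsLT hats) fun s hs => (hbefore s ⟨hs.1.le, hs.2⟩).posSemidef)
  obtain ⟨x, hx, hxP⟩ := hts.2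
  have hx0 : x ≠ 0 := ne_zero_of_mem_unit_sphere ⟨x, hx⟩
  have hxP0 : x ⬝ᵥ P ts *ᵥ x = 0 :=
    le_antisymm hxP (by simpa using hpsd.dotProduct_mulVec_nonneg x)
  have hker : P ts *ᵥ x = 0 := (hpsd.dotProduct_mulVec_zero_iff x).1 (by simpa using hxP0)
  obtain ⟨s, hs_neg, hs⟩ := (((hP ts htsT).dotProduct_mulVec x x).eventually_nhdsLT_neg
    (hP' ts htsT x hx0 hker) hxP0 |>.and (Ioo_mem_nhdsLT hats)).exists
  exact hs_neg.not_gt (by simpa using (hbefore s ⟨hs.1.le, hs.2⟩).dotProduct_mulVec_pos hx0)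

end Analysis

section Riccati

variable {R ι κ : Type*} [Fintype ι] [Fintype κ]

def riccatiField [CommRing R] (A : Matrix ι ι R) (C : Matrix κ ι R) (Q : Matrix κ κ R)
    (V P : Matrix ι ι R) : Matrix ι ι R :=
  A * P + P * Aᵀ - P * Cᵀ * Q * C * P + V

theorem riccatiField_sub_transpose [CommRing R] {A : Matrix ι ι R} {C : Matrix κ ι R}
    {Q : Matrix κ κ R} {V P : Matrix ι ι R} (hQ : Qᵀ = Q) (hV : Vᵀ = V) :
    riccatiField A C Q V P - (riccatiField A C Q V P)ᵀ =
      (A - P * Cᵀ * Q * C) * (P - Pᵀ) + (P - Pᵀ) * (A - P * Cᵀ * Q * C)ᵀ := by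
  simp only [riccatiField, transpose_add, transpose_sub, transpose_mul, transpose_transpose, hQ,
    hV, Matrix.mul_sub, Matrix.sub_mul, Matrix.mul_assoc]
  abel

theorem riccatiField_dotProduct_mulVec_of_mulVec_eq_zero [CommRing R] {A : Matrix ι ι R}
    {C : Matrix κ ι R} {Q : Matrix κ κ R} {V P : Matrix ι ι R} {x : ι → R} (hP : Pᵀ = P)
    (hx : P *ᵥ x = 0) : x ⬝ᵥ riccatiField A C Q V P *ᵥ x = x ⬝ᵥ V *ᵥ x := by
  have hxP : x ᵥ* P = 0 := by rw [← mulVec_transpose, hP, hx]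
  simp only [riccatiField, add_mulVec, sub_mulVec, ← mulVec_mulVec, hx, mulVec_zero,
    dotProduct_add, dotProduct_sub, dotProduct_mulVec x P, hxP, zero_dotProduct]
  simp

theorem riccati_transpose_eq {A : ℝ → Matrix ι ι ℝ} {C : ℝ → Matrix κ ι ℝ}
    {Q : ℝ → Matrix κ κ ℝ} {V P : ℝ → Matrix ι ι ℝ} {a b : ℝ}
    (hA : Continuous A) (hC : Continuous C) (hQ : Continuous Q)
    (hQ_symm : ∀ t, (Q t)ᵀ = Q t) (hV_symm : ∀ t, (V t)ᵀ = V t) (ha : (P a)ᵀ = P a)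
    (hP : ∀ t ∈ Ico a b, HasDerivAt P (riccatiField (A t) (C t) (Q t) (V t) (P t)) t) :
    ∀ t ∈ Ico a b, (P t)ᵀ = P t := by
  intro t ht
  have hPc : ContinuousOn P (Icc a t) := fun s hs =>
    (hP s ⟨hs.1, hs.2.trans_lt ht.2⟩).continuousAt.continuousWithinAt
  set M : ℝ → Matrix ι ι ℝ := fun s => A s - P s * (C s)ᵀ * Q s * C s
  have hM : ContinuousOn M (Icc a t) := by fun_prop
  have hMT : ContinuousOn (fun s => (M s)ᵀ) (Icc a t) := by fun_prop
  have hD : ContinuousOn (fun s => P s - (P s)ᵀ) (Icc a t) := by fun_prop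
  refine (sub_eq_zero.1 (eq_zero_of_hasDerivWithinAt_mul_add_mul hM hMT hD (fun s hs => ?_)
    (by rw [ha, sub_self]) t ⟨ht.1, le_rfl⟩)).symm
  have hs' : s ∈ Ico a b := ⟨hs.1, hs.2.trans ht.2⟩
  rw [← riccatiField_sub_transpose (hQ_symm s) (hV_symm s)]
  exact ((hP s hs').sub (hP s hs').matrix_transpose).hasDerivWithinAt

end Riccati

theorem riccati_posdef_general (n m : ℕ) (T : ℝ)
    (A : ℝ → Matrix (Fin n) (Fin n) ℝ)
    (C : ℝ → Matrix (Fin m) (Fin n) ℝ)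
    (Q : ℝ → Matrix (Fin m) (Fin m) ℝ)
    (V : ℝ → Matrix (Fin n) (Fin n) ℝ)
    (P : ℝ → Matrix (Fin n) (Fin n) ℝ)
    (hA : Continuous A) (hC : Continuous C) (hQ : Continuous Q)
    (hQpd : ∀ t, (Q t)ᵀ = Q t ∧ (Q t).PosDef)
    (hVpd : ∀ t, (V t)ᵀ = V t ∧ (V t).PosDef)
    (hP0 : (P 0)ᵀ = P 0 ∧ (P 0).PosDef)
    (hode : ∀ t ∈ Set.Ico (0 : ℝ) T, HasDerivAt P
        (A t * P t + P t * (A t)ᵀ - P t * (C t)ᵀ * Q t * C t * P t + V t) t) :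
    ∀ t ∈ Set.Ico (0 : ℝ) T, (P t)ᵀ = P t ∧ (P t).PosDef := by
  change ∀ t ∈ Ico 0 T, HasDerivAt P (riccatiField (A t) (C t) (Q t) (V t) (P t)) t at hode
  have hsymm : ∀ t ∈ Ico 0 T, (P t)ᵀ = P t :=
    riccati_transpose_eq hA hC hQ (fun t => (hQpd t).1) (fun t => (hVpd t).1) hP0.1 hode
  have hpos : ∀ t ∈ Ico 0 T, (P t).PosDef := by
    refine posDef_of_hasDerivAt_of_mulVec_eq_zero hode
      (fun t ht => (conjTranspose_eq_transpose_of_trivial _).trans (hsymm t ht)) hP0.2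
      fun t ht x hx hPx => ?_
    rw [riccatiField_dotProduct_mulVec_of_mulVec_eq_zero (hsymm t ht) hPx]
    simpa using (hVpd t).2.dotProduct_mulVec_pos hx
  exact fun t ht => ⟨hsymm t ht, hpos t ht⟩

/-- solutions of the continuous Riccati equation
`Ṗ = AP + PAᵀ - PCᵀQCP + V` with `P(0)` symmetric positive definite and
`Q(t), V(t)` continuous symmetric positive definite remain symmetric positive
definite on `[0, T)`. -/
theorem riccati_posdef (n m : ℕ) (T : ℝ) (hT : 0 < T)
    (A : ℝ → Matrix (Fin n) (Fin n) ℝ)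
    (C : ℝ → Matrix (Fin m) (Fin n) ℝ)
    (Q : ℝ → Matrix (Fin m) (Fin m) ℝ)
    (V : ℝ → Matrix (Fin n) (Fin n) ℝ)
    (P : ℝ → Matrix (Fin n) (Fin n) ℝ)
    (hA : Continuous A) (hC : Continuous C) (hQ : Continuous Q) (hV : Continuous V)
    (hQpd : ∀ t, (Q t)ᵀ = Q t ∧ (Q t).PosDef)
    (hVpd : ∀ t, (V t)ᵀ = V t ∧ (V t).PosDef)
    (hP0 : (P 0)ᵀ = P 0 ∧ (P 0).PosDef)
    (hode : ∀ t ∈ Set.Ico (0 : ℝ) T, HasDerivAt P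
        (A t * P t + P t * (A t)ᵀ - P t * (C t)ᵀ * Q t * C t * P t + V t) t) :
    ∀ t ∈ Set.Ico (0 : ℝ) T, (P t)ᵀ = P t ∧ (P t).PosDef :=
  riccati_posdef_general n m T A C Q V P hA hC hQ hQpd hVpd hP0 hode
end
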